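/- Let F be a Minkowski norm on V and v ∈ V with F(v)<1, and let F̃ be the norm defined by the navigation datum (F,v) (so F̃(y+F(y)v)=F(y)). If y ≠ 0 satisfies ⟨v,y⟩_y^F = 0 and u satisfies ⟨u,y⟩_y^F = 0, then with ỹ = y + F(y)v one has ⟨u,u⟩_ỹ^{F̃} = ⟨u,u⟩_y^F. -/

import Mathlib

open scoped RealInnerProductSpace

variable {V : Type*} [NormedAddCommGroup V] [NormedSpace ℝ V] [FiniteDimensional ℝ V]

/-- The fundamental form of a Minkowski norm:
`⟨u,v⟩_y = (1/2) ∂²/∂s∂t F²(y+su+tv)|_{s=t=0}`. -/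
noncomputable def fundForm (F : V → ℝ) (y u v : V) : ℝ :=
  (1/2) * deriv (fun s : ℝ => deriv (fun t : ℝ => (F (y + s • u + t • v))^2) 0) 0

/-- A Minkowski norm on a finite-dimensional real vector space. -/
def IsMinkowskiNorm (F : V → ℝ) : Prop :=
  (∀ y, 0 ≤ F y) ∧ (∀ y : V, y ≠ 0 → 0 < F y) ∧
  ContDiffOn ℝ (⊤ : ℕ∞) F {(0 : V)}ᶜ ∧
  (∀ c : ℝ, 0 ≤ c → ∀ y, F (c • y) = c * F y) ∧
  (∀ y : V, y ≠ 0 → ∀ u : V, u ≠ 0 → 0 < fundForm F y u u)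

open Filter Topology

private lemma line_hasDerivAt (y u : V) (r : ℝ) :
    HasDerivAt (fun s : ℝ => y + s • u) u r := by
  simpa using ((hasDerivAt_id r).smul_const u).const_add y

/-- Derivative of `r ↦ DG(ψ r)[w]` along a curve. -/
private lemma hasDerivAt_fderiv_along {G : V → ℝ} {ψ : ℝ → V} {ψ' : V} {r : ℝ}
    (hψ : HasDerivAt ψ ψ' r) (hG : ContDiffAt ℝ (⊤ : ℕ∞) G (ψ r)) (w : V) :
    HasDerivAt (fun s => fderiv ℝ G (ψ s) w)
      ((fderiv ℝ (fderiv ℝ G) (ψ r) ψ') w) r := by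
  have h1 : ContDiffAt ℝ 1 (fderiv ℝ G) (ψ r) := hG.fderiv_right (by exact WithTop.coe_le_coe.mpr le_top)
  have h2 : HasDerivAt (fun s => fderiv ℝ G (ψ s))
      (fderiv ℝ (fderiv ℝ G) (ψ r) ψ') r :=
    (h1.differentiableAt (by simp)).hasFDerivAt.comp_hasDerivAt r hψ
  simpa using h2.clm_apply (hasDerivAt_const r w)

/-- The fundamental form equals half the second derivative of `F²`. -/
private lemma fundForm_eq {F : V → ℝ}
    (hG : ContDiffOn ℝ (⊤ : ℕ∞) (fun x => (F x)^2) {(0 : V)}ᶜ)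
    {y : V} (hy : y ≠ 0) (u w : V) :
    fundForm F y u w
      = (1/2) * (fderiv ℝ (fderiv ℝ (fun x : V => (F x)^2)) y u) w := by
  set G : V → ℝ := fun x => (F x)^2 with hGdef
  have hopen : IsOpen ({(0:V)}ᶜ) := isOpen_compl_singleton
  have hGat : ∀ x : V, x ≠ 0 → ContDiffAt ℝ (⊤ : ℕ∞) G x := fun x hx =>
    hG.contDiffAt (hopen.mem_nhds hx)
  have hlc : ContinuousAt (fun s : ℝ => y + s • u) 0 := by fun_prop
  have hne : ∀ᶠ s : ℝ in 𝓝 0, y + s • u ≠ 0 := hlc.eventually_ne (by simpa using hy)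
  have hEq : (fun s : ℝ => deriv (fun t : ℝ => (F (y + s • u + t • w))^2) 0)
      =ᶠ[𝓝 (0:ℝ)] fun s => fderiv ℝ G (y + s • u) w := by
    filter_upwards [hne] with s hs
    have hl : HasDerivAt (fun t : ℝ => y + s • u + t • w) w 0 := line_hasDerivAt _ _ _
    have hx0 : y + s • u + (0:ℝ) • w = y + s • u := by simp
    have hd : HasFDerivAt G (fderiv ℝ G (y + s • u)) (y + s • u + (0:ℝ) • w) := by
      rw [hx0]; exact ((hGat _ hs).differentiableAt (by simp)).hasFDerivAt
    exact (hd.comp_hasDerivAt 0 hl).deriv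
  have houter : HasDerivAt (fun s : ℝ => fderiv ℝ G (y + s • u) w)
      ((fderiv ℝ (fderiv ℝ G) y u) w) 0 := by
    have h0 : y + (0:ℝ) • u = y := by simp
    have hGy : ContDiffAt ℝ (⊤ : ℕ∞) G (y + (0:ℝ) • u) := by rw [h0]; exact hGat y hy
    have := hasDerivAt_fderiv_along (line_hasDerivAt y u 0) hGy w
    rwa [h0] at this
  have : deriv (fun s : ℝ => deriv (fun t : ℝ => (F (y + s • u + t • w))^2) 0) 0
      = (fderiv ℝ (fderiv ℝ G) y u) w := by
    rw [hEq.deriv_eq]; exact houter.deriv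
  rw [fundForm, this]

/-- Euler's relation for the second derivative of a 2-homogeneous function. -/
private lemma euler_snd {G : V → ℝ} (hG : ContDiffOn ℝ (⊤ : ℕ∞) G {(0 : V)}ᶜ)
    (hhom : ∀ c : ℝ, 0 ≤ c → ∀ x, G (c • x) = c ^ 2 * G x)
    {y : V} (hy : y ≠ 0) (u : V) :
    (fderiv ℝ (fderiv ℝ G) y u) y = fderiv ℝ G y u := by
  have hopen : IsOpen ({(0:V)}ᶜ) := isOpen_compl_singleton
  have hGat : ∀ x : V, x ≠ 0 → ContDiffAt ℝ (⊤ : ℕ∞) G x := fun x hx =>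
    hG.contDiffAt (hopen.mem_nhds hx)
  have heuler : ∀ x : V, x ≠ 0 → fderiv ℝ G x x = 2 * G x := by
    intro x hx
    have hsm : HasDerivAt (fun c : ℝ => c • x) x 1 := by
      simpa using (hasDerivAt_id (1:ℝ)).smul_const x
    have hGx : ContDiffAt ℝ (⊤ : ℕ∞) G ((1:ℝ) • x) := by rw [one_smul]; exact hGat x hx
    have h1 : HasDerivAt (fun c : ℝ => G (c • x)) (fderiv ℝ G ((1:ℝ) • x) x) 1 :=
      (hGx.differentiableAt (by simp)).hasFDerivAt.comp_hasDerivAt 1 hsm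
    have h2 : HasDerivAt (fun c : ℝ => c ^ 2 * G x) (2 * G x) 1 := by
      have := (hasDerivAt_pow 2 (1:ℝ)).mul_const (G x)
      simpa using this
    have hEq : (fun c : ℝ => c ^ 2 * G x) =ᶠ[𝓝 (1:ℝ)] fun c => G (c • x) := by
      filter_upwards [eventually_gt_nhds (zero_lt_one)] with c hc
      exact (hhom c hc.le x).symm
    have h1' : HasDerivAt (fun c : ℝ => c ^ 2 * G x) (fderiv ℝ G ((1:ℝ) • x) x) 1 :=
      h1.congr_of_eventuallyEq hEq
    have := h1'.unique h2
    rwa [one_smul] at this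
  have hD2 : HasFDerivAt (fderiv ℝ G) (fderiv ℝ (fderiv ℝ G) y) y :=
    (((hGat y hy).fderiv_right (m := 1) (by exact WithTop.coe_le_coe.mpr le_top)).differentiableAt one_ne_zero).hasFDerivAt
  have hΦ1 : HasFDerivAt (fun x : V => fderiv ℝ G x x)
      ((fderiv ℝ G y).comp (ContinuousLinearMap.id ℝ V)
        + (fderiv ℝ (fderiv ℝ G) y).flip y) y :=
    hD2.clm_apply (hasFDerivAt_id y)
  have hGy : DifferentiableAt ℝ G y := ((hGat y hy).differentiableAt (by simp))
  have hΦ2 : HasFDerivAt (fun x : V => 2 * G x) ((2:ℝ) • fderiv ℝ G y) y :=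
    hGy.hasFDerivAt.const_mul 2
  have hEq2 : (fun x : V => 2 * G x) =ᶠ[𝓝 y] fun x => fderiv ℝ G x x := by
    filter_upwards [hopen.mem_nhds hy] with x hx
    exact (heuler x hx).symm
  have hΦ2' : HasFDerivAt (fun x : V => 2 * G x)
      ((fderiv ℝ G y).comp (ContinuousLinearMap.id ℝ V)
        + (fderiv ℝ (fderiv ℝ G) y).flip y) y :=
    hΦ1.congr_of_eventuallyEq hEq2
  have heq := hΦ2'.unique hΦ2
  have := congrArg (fun L : V →L[ℝ] ℝ => L u) heq
  simp only [ContinuousLinearMap.add_apply, ContinuousLinearMap.coe_comp',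
    Function.comp_apply, ContinuousLinearMap.coe_id', id_eq,
    ContinuousLinearMap.flip_apply, ContinuousLinearMap.smul_apply,
    smul_eq_mul] at this
  linarith

private lemma fderiv_sq {F : V → ℝ} {y : V} (hF : DifferentiableAt ℝ F y) :
    fderiv ℝ (fun x => (F x)^2) y = (2 * F y) • fderiv ℝ F y := by
  have h := hF.hasFDerivAt.mul hF.hasFDerivAt
  have h2 : HasFDerivAt (fun x => (F x)^2) ((2 * F y) • fderiv ℝ F y) y := by
    have hfun : (fun x => F x * F x) = fun x => (F x)^2 := by
      funext x; ring
    have hder : F y • fderiv ℝ F y + F y • fderiv ℝ F y = (2 * F y) • fderiv ℝ F y := by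
      ext w; simp [smul_eq_mul]; ring
    rw [show F * F = fun x => F x * F x from rfl, hfun, hder] at h
    exact h
  exact h2.fderiv

/-- If moreover ⟨v,y⟩_y^F = 0, then ⟨u,u⟩_ỹ^{F̃} = ⟨u,u⟩_y^F. -/
theorem navigation_fundForm_of_orthogonal (F Ft : V → ℝ)
    (hF : IsMinkowskiNorm F) (hFt : IsMinkowskiNorm Ft)
    (v : V) (hv : F v < 1) (hbij : Function.Bijective (fun y : V => y + F y • v))
    (hnav : ∀ y : V, Ft (y + F y • v) = F y)
    (y : V) (hy : y ≠ 0) (hvy : fundForm F y v y = 0)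
    (u : V) (hu : fundForm F y u y = 0) :
    fundForm Ft (y + F y • v) u u = fundForm F y u u := by
  obtain ⟨hF0, hFpos, hFcd, hFhom, hFpd⟩ := hF
  obtain ⟨hFt0, hFtpos, hFtcd, hFthom, hFtpd⟩ := hFt
  set G : V → ℝ := fun x => (F x)^2 with hGdef
  set Gt : V → ℝ := fun x => (Ft x)^2 with hGtdef
  have hopen : IsOpen ({(0:V)}ᶜ) := isOpen_compl_singleton
  have hGcd : ContDiffOn ℝ (⊤ : ℕ∞) G {(0:V)}ᶜ := hFcd.pow 2
  have hGtcd : ContDiffOn ℝ (⊤ : ℕ∞) Gt {(0:V)}ᶜ := hFtcd.pow 2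
  have hGhom : ∀ c : ℝ, 0 ≤ c → ∀ x, G (c • x) = c ^ 2 * G x := by
    intro c hc x
    simp only [hGdef, hFhom c hc x]; ring
  have hF00 : F 0 = 0 := by
    have := hFhom 0 le_rfl 0; simpa using this
  set yt : V := y + F y • v with hytdef
  have hytne : yt ≠ 0 := by
    intro h
    apply hy
    have h0 : (fun x : V => x + F x • v) 0 = 0 := by simp [hF00]
    exact hbij.injective (a₁ := y) (a₂ := 0) (by simpa [hytdef] using h.trans h0.symm)
  have hFy : DifferentiableAt ℝ F y :=
    (hFcd.contDiffAt (hopen.mem_nhds hy)).differentiableAt (by simp)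
  have hFtyt : DifferentiableAt ℝ Ft yt :=
    (hFtcd.contDiffAt (hopen.mem_nhds hytne)).differentiableAt (by simp)
  -- gradient orthogonality for G
  have hGrad : ∀ w : V, fundForm F y w y = 0 → fderiv ℝ G y w = 0 := by
    intro w hw
    have h1 := fundForm_eq (F := F) hGcd hy w y
    have h2 := euler_snd hGcd hGhom hy w
    rw [hw] at h1
    rw [← h2]
    linarith
  have hGyu : fderiv ℝ G y u = 0 := hGrad u hu
  have hGyv : fderiv ℝ G y v = 0 := hGrad v hvy
  have hFgrad : ∀ w : V, fderiv ℝ G y w = 0 → fderiv ℝ F y w = 0 := by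
    intro w hw
    rw [fderiv_sq hFy] at hw
    simp only [ContinuousLinearMap.smul_apply, smul_eq_mul] at hw
    have hFypos : 0 < F y := hFpos y hy
    have h2 : 2 * F y ≠ 0 := by positivity
    exact (mul_eq_zero.mp hw).resolve_left h2
  have hFyu : fderiv ℝ F y u = 0 := hFgrad u hGyu
  have hFyv : fderiv ℝ F y v = 0 := hFgrad v hGyv
  -- navigation derivative: fderiv Ft yt v = 0
  have hΦ : HasFDerivAt (fun x : V => x + F x • v)
      (ContinuousLinearMap.id ℝ V + (fderiv ℝ F y).smulRight v) y :=
    (hasFDerivAt_id y).add (hFy.hasFDerivAt.smul_const v)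
  have hFtv : fderiv ℝ Ft yt v = 0 := by
    have hcomp : HasFDerivAt (Ft ∘ fun x : V => x + F x • v)
        ((fderiv ℝ Ft yt).comp
          (ContinuousLinearMap.id ℝ V + (fderiv ℝ F y).smulRight v)) y :=
      hFtyt.hasFDerivAt.comp y hΦ
    have hfun : (Ft ∘ fun x : V => x + F x • v) = F := funext fun x => hnav x
    rw [hfun] at hcomp
    have hkey := hcomp.unique hFy.hasFDerivAt
    have happ := congrArg (fun L : V →L[ℝ] ℝ => L v) hkey
    simp only [ContinuousLinearMap.coe_comp', Function.comp_apply,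
      ContinuousLinearMap.add_apply, ContinuousLinearMap.coe_id', id_eq,
      ContinuousLinearMap.smulRight_apply, hFyv, zero_smul, add_zero] at happ
    exact happ
  have hGtv : fderiv ℝ Gt yt v = 0 := by
    rw [fderiv_sq hFtyt]
    simp [hFtv]
  -- main computation
  set f : ℝ → ℝ := fun r => F (y + r • u) with hfdef
  set ψ : ℝ → V := fun r => (y + r • u) + f r • v with hψdef
  have hy0 : y + (0:ℝ) • u = y := by simp
  have hψ0 : ψ 0 = yt := by simp [hψdef, hfdef, hytdef]
  have hkeyfun : (fun r => Gt (ψ r)) = fun r => G (y + r • u) := by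
    funext r
    simp only [hGtdef, hGdef, hψdef, hfdef, hnav]
  have hlc : ContinuousAt (fun r : ℝ => y + r • u) 0 := by fun_prop
  have hne1 : ∀ᶠ r : ℝ in 𝓝 0, y + r • u ≠ 0 := hlc.eventually_ne (by simpa using hy)
  have hfD : ∀ r : ℝ, y + r • u ≠ 0 →
      HasDerivAt f (fderiv ℝ F (y + r • u) u) r := fun r hr =>
    ((hFcd.contDiffAt (hopen.mem_nhds hr)).differentiableAt
      (by simp)).hasFDerivAt.comp_hasDerivAt r (line_hasDerivAt y u r)
  have hψD : ∀ r : ℝ, y + r • u ≠ 0 →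
      HasDerivAt ψ (u + (fderiv ℝ F (y + r • u) u) • v) r := fun r hr =>
    (line_hasDerivAt y u r).add ((hfD r hr).smul_const v)
  have hψc : ContinuousAt ψ 0 := (hψD 0 (by rw [hy0]; exact hy)).continuousAt
  have hne2 : ∀ᶠ r : ℝ in 𝓝 0, ψ r ≠ 0 := hψc.eventually_ne (by rw [hψ0]; exact hytne)
  have hψD0 : HasDerivAt ψ u 0 := by
    have := hψD 0 (by rw [hy0]; exact hy)
    rw [hy0, hFyu] at this
    simpa using this
  -- eventual formulas for the first derivative
  have hq : ∀ᶠ r : ℝ in 𝓝 0, deriv (fun s => G (y + s • u)) r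
      = fderiv ℝ G (y + r • u) u := by
    filter_upwards [hne1] with r hr
    exact (((hGcd.contDiffAt (hopen.mem_nhds hr)).differentiableAt
      (by simp)).hasFDerivAt.comp_hasDerivAt r (line_hasDerivAt y u r)).deriv
  have hp : ∀ᶠ r : ℝ in 𝓝 0, deriv (fun s => G (y + s • u)) r
      = fderiv ℝ Gt (ψ r) u + fderiv ℝ F (y + r • u) u * fderiv ℝ Gt (ψ r) v := by
    filter_upwards [hne1, hne2] with r hr1 hr2
    have h1 : HasDerivAt (fun s => Gt (ψ s))
        (fderiv ℝ Gt (ψ r) (u + (fderiv ℝ F (y + r • u) u) • v)) r :=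
      ((hGtcd.contDiffAt (hopen.mem_nhds hr2)).differentiableAt
        (by simp)).hasFDerivAt.comp_hasDerivAt r (hψD r hr1)
    rw [hkeyfun] at h1
    rw [h1.deriv, map_add, map_smul, smul_eq_mul]
  have hpq : (fun r : ℝ => fderiv ℝ G (y + r • u) u) =ᶠ[𝓝 (0:ℝ)]
      fun r => fderiv ℝ Gt (ψ r) u + fderiv ℝ F (y + r • u) u * fderiv ℝ Gt (ψ r) v := by
    filter_upwards [hq, hp] with r h1 h2
    rw [← h1, h2]
  -- second derivatives
  have hGat : ContDiffAt ℝ (⊤ : ℕ∞) G (y + (0:ℝ) • u) := by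
    rw [hy0]; exact hGcd.contDiffAt (hopen.mem_nhds hy)
  have hGtat : ContDiffAt ℝ (⊤ : ℕ∞) Gt (ψ 0) := by
    rw [hψ0]; exact hGtcd.contDiffAt (hopen.mem_nhds hytne)
  have hFat : ContDiffAt ℝ (⊤ : ℕ∞) F (y + (0:ℝ) • u) := by
    rw [hy0]; exact hFcd.contDiffAt (hopen.mem_nhds hy)
  have hL : HasDerivAt (fun r : ℝ => fderiv ℝ G (y + r • u) u)
      ((fderiv ℝ (fderiv ℝ G) y u) u) 0 := by
    have := hasDerivAt_fderiv_along (line_hasDerivAt y u 0) hGat u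
    rwa [hy0] at this
  have hR1 : HasDerivAt (fun r : ℝ => fderiv ℝ Gt (ψ r) u)
      ((fderiv ℝ (fderiv ℝ Gt) yt u) u) 0 := by
    have := hasDerivAt_fderiv_along hψD0 hGtat u
    rwa [hψ0] at this
  have hR2a : HasDerivAt (fun r : ℝ => fderiv ℝ F (y + r • u) u)
      ((fderiv ℝ (fderiv ℝ F) y u) u) 0 := by
    have := hasDerivAt_fderiv_along (line_hasDerivAt y u 0) hFat u
    rwa [hy0] at this
  have hR2b : HasDerivAt (fun r : ℝ => fderiv ℝ Gt (ψ r) v)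
      ((fderiv ℝ (fderiv ℝ Gt) yt u) v) 0 := by
    have := hasDerivAt_fderiv_along hψD0 hGtat v
    rwa [hψ0] at this
  have hR2 : HasDerivAt
      (fun r : ℝ => fderiv ℝ F (y + r • u) u * fderiv ℝ Gt (ψ r) v)
      (0 : ℝ) 0 := by
    have h := hR2a.mul hR2b
    have hz1 : fderiv ℝ F (y + (0:ℝ) • u) u = 0 := by rw [hy0]; exact hFyu
    have hz2 : fderiv ℝ Gt (ψ 0) v = 0 := by rw [hψ0]; exact hGtv
    rw [hz1, hz2] at h
    simpa [Pi.mul_def] using h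
  have hR : HasDerivAt
      (fun r : ℝ => fderiv ℝ Gt (ψ r) u + fderiv ℝ F (y + r • u) u * fderiv ℝ Gt (ψ r) v)
      ((fderiv ℝ (fderiv ℝ Gt) yt u) u) 0 := by
    simpa [Pi.add_def] using hR1.add hR2
  have hL' : HasDerivAt
      (fun r : ℝ => fderiv ℝ Gt (ψ r) u + fderiv ℝ F (y + r • u) u * fderiv ℝ Gt (ψ r) v)
      ((fderiv ℝ (fderiv ℝ G) y u) u) 0 :=
    hL.congr_of_eventuallyEq hpq.symm
  have hmain : (fderiv ℝ (fderiv ℝ Gt) yt u) u = (fderiv ℝ (fderiv ℝ G) y u) u :=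
    hR.unique hL'
  have e1 := fundForm_eq (F := Ft) hGtcd hytne u u
  have e2 := fundForm_eq (F := F) hGcd hy u u
  rw [← hGtdef] at e1
  rw [← hGdef] at e2
  rw [e1, e2, hmain]
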